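/- arXiv:2509.26250 — 2 statements merged into one kernel-verified Lean document; each statement's English description precedes it below -/
import Mathlib

section
/- For a compactly supported probability measure ρ₀, the moments of the evolved measure dρ_t = K(t)e^{λ²t}dρ₀ are given explicitly by s_{2k}(t) = (Σ_{m=0}^∞ s_{2(k+m)}(0) t^m / m!) / (Σ_{m=0}^∞ s_{2m}(0) t^m / m!), where both series converge absolutely for all t ≥ 0. -/
/-! Expanding `e^{λ² t} = ∑ λ^{2m} t^m / m!` under the integral gives
`∫ λ^{2k} e^{λ² t} dρ₀ = ∑ s_{2(k+m)}(0) t^m / m!`; the interchange is justified because on the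
support `|λ| ≤ M` the terms are dominated by the convergent series `M^{2(k+m)} |t|^m / m!`.
The moment `s_{2k}(t)` is the quotient of this integral by the one with `k = 0`. -/

open MeasureTheory Real

/-- The time-evolved measure `dρ_t(λ) = K(t) e^{λ² t} dρ₀(λ)` with
`K(t) = (∫ e^{λ² t} dρ₀(λ))⁻¹`. -/
noncomputable def evolvedMeasure (ρ₀ : Measure ℝ) (t : ℝ) : Measure ℝ :=
  (∫⁻ l, ENNReal.ofReal (Real.exp (l ^ 2 * t)) ∂ρ₀)⁻¹ •
    ρ₀.withDensity (fun l => ENNReal.ofReal (Real.exp (l ^ 2 * t)))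

/-- The `k`-th moment of the evolved measure at time `t`. -/
noncomputable def moment (ρ₀ : Measure ℝ) (k : ℕ) (t : ℝ) : ℝ :=
  ∫ l, l ^ k ∂(evolvedMeasure ρ₀ t)

open scoped Nat

lemma moment_eq_integral_div (ρ₀ : Measure ℝ) (n : ℕ) (t : ℝ) :
    moment ρ₀ n t = (∫ l, l ^ n * exp (l ^ 2 * t) ∂ρ₀) / ∫ l, exp (l ^ 2 * t) ∂ρ₀ := by
  have hnorm : (∫⁻ l, ENNReal.ofReal (exp (l ^ 2 * t)) ∂ρ₀).toReal = ∫ l, exp (l ^ 2 * t) ∂ρ₀ :=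
    (integral_eq_lintegral_of_nonneg_ae (ae_of_all _ fun l => (exp_pos _).le)
      (by fun_prop)).symm
  rw [moment, evolvedMeasure, integral_smul_measure, ENNReal.toReal_inv, hnorm,
    integral_withDensity_eq_integral_toReal_smul (by fun_prop)
      (ae_of_all _ fun _ => ENNReal.ofReal_lt_top), smul_eq_mul, div_eq_inv_mul]
  congr 2 with l
  rw [ENNReal.toReal_ofReal (exp_pos _).le, smul_eq_mul, mul_comm]

lemma moment_zero (ρ₀ : Measure ℝ) [IsProbabilityMeasure ρ₀] (n : ℕ) :
    moment ρ₀ n 0 = ∫ l, l ^ n ∂ρ₀ := by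
  simp [moment_eq_integral_div]

section BoundedSupport

variable {ρ : Measure ℝ} [IsFiniteMeasure ρ] {C : ℝ}

lemma integrable_pow_of_ae_abs_le (hC : ∀ᵐ l ∂ρ, |l| ≤ C) (n : ℕ) :
    Integrable (fun l => l ^ n) ρ := by
  refine (integrable_const (C ^ n)).mono' (by fun_prop) ?_
  filter_upwards [hC] with l hl
  rw [norm_pow, norm_eq_abs]
  exact pow_le_pow_left₀ (abs_nonneg l) hl n

lemma summable_integral_norm_pow_mul_exp_series (hC : ∀ᵐ l ∂ρ, |l| ≤ C) (j : ℕ) (t : ℝ) :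
    Summable fun m : ℕ => ∫ l, ‖l ^ (2 * (j + m)) * (t ^ m / m !)‖ ∂ρ := by
  have hmajor : Summable fun m : ℕ => C ^ (2 * (j + m)) * (|t| ^ m / m !) * ρ.real Set.univ := by
    refine (((summable_pow_div_factorial (C ^ 2 * |t|)).mul_left (C ^ (2 * j))).mul_right
      (ρ.real Set.univ)).congr fun m => ?_
    rw [mul_add, pow_add, pow_mul, mul_pow]
    ring
  refine hmajor.of_nonneg_of_le (fun m => integral_nonneg fun l => norm_nonneg _) fun m => ?_
  calc ∫ l, ‖l ^ (2 * (j + m)) * (t ^ m / m !)‖ ∂ρ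
      ≤ ∫ _, C ^ (2 * (j + m)) * (|t| ^ m / m !) ∂ρ := by
        refine integral_mono_of_nonneg (ae_of_all _ fun l => norm_nonneg _)
          (integrable_const _) ?_
        filter_upwards [hC] with l hl
        rw [norm_mul, norm_pow, norm_eq_abs, norm_div, norm_pow, norm_eq_abs, RCLike.norm_natCast]
        gcongr
    _ = C ^ (2 * (j + m)) * (|t| ^ m / m !) * ρ.real Set.univ := by
        rw [integral_const, smul_eq_mul, mul_comm]

lemma hasSum_integral_pow_mul_exp (hC : ∀ᵐ l ∂ρ, |l| ≤ C) (j : ℕ) (t : ℝ) :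
    HasSum (fun m : ℕ => (∫ l, l ^ (2 * (j + m)) ∂ρ) * t ^ m / m !)
      (∫ l, l ^ (2 * j) * exp (l ^ 2 * t) ∂ρ) := by
  have hseries (l : ℝ) :
      HasSum (fun m : ℕ => l ^ (2 * (j + m)) * (t ^ m / m !)) (l ^ (2 * j) * exp (l ^ 2 * t)) := by
    rw [exp_eq_exp_ℝ]
    refine ((NormedSpace.expSeries_div_hasSum_exp (l ^ 2 * t)).mul_left (l ^ (2 * j))).congr_fun
      fun m => ?_
    rw [mul_add, pow_add, mul_pow, pow_mul]
    ring
  have hswap := hasSum_integral_of_summable_integral_norm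
    (fun m => (integrable_pow_of_ae_abs_le hC _).mul_const _)
    (summable_integral_norm_pow_mul_exp_series hC j t)
  simp only [integral_mul_const, (hseries _).tsum_eq] at hswap
  simpa only [mul_div_assoc] using hswap

lemma summable_abs_integral_pow_mul (hC : ∀ᵐ l ∂ρ, |l| ≤ C) (j : ℕ) (t : ℝ) :
    Summable fun m : ℕ => |∫ l, l ^ (2 * (j + m)) ∂ρ| * t ^ m / m ! := by
  refine (summable_integral_norm_pow_mul_exp_series hC j t).of_norm_bounded fun m => ?_
  calc ‖|∫ l, l ^ (2 * (j + m)) ∂ρ| * t ^ m / (m ! : ℝ)‖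
      = ‖∫ l, l ^ (2 * (j + m)) * (t ^ m / m !) ∂ρ‖ := by
        rw [integral_mul_const, mul_div_assoc, norm_mul, norm_mul, norm_abs_eq_norm]
    _ ≤ ∫ l, ‖l ^ (2 * (j + m)) * (t ^ m / m !)‖ ∂ρ := norm_integral_le_integral_norm _

end BoundedSupport

theorem stmt4_general (ρ₀ : Measure ℝ) [IsProbabilityMeasure ρ₀]
    (M : ℝ) (hsupp : ρ₀ (Set.Icc (-M) M)ᶜ = 0)
    (k : ℕ) (t : ℝ) :
    Summable (fun m : ℕ => |moment ρ₀ (2 * (k + m)) 0| * t ^ m / m.factorial) ∧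
    Summable (fun m : ℕ => |moment ρ₀ (2 * m) 0| * t ^ m / m.factorial) ∧
    moment ρ₀ (2 * k) t =
      (∑' m : ℕ, moment ρ₀ (2 * (k + m)) 0 * t ^ m / m.factorial) /
        (∑' m : ℕ, moment ρ₀ (2 * m) 0 * t ^ m / m.factorial) := by
  have hM : ∀ᵐ l ∂ρ₀, |l| ≤ M := by
    filter_upwards [mem_ae_iff.2 hsupp] with l hl using abs_le.2 hl
  have hnum := hasSum_integral_pow_mul_exp hM k t
  have hden := hasSum_integral_pow_mul_exp hM 0 t
  simp only [zero_add, mul_zero, pow_zero, one_mul] at hden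
  simp only [moment_zero]
  refine ⟨summable_abs_integral_pow_mul hM k t,
    by simpa only [zero_add] using summable_abs_integral_pow_mul hM 0 t, ?_⟩
  rw [moment_eq_integral_div, hnum.tsum_eq, hden.tsum_eq]

theorem stmt4 (ρ₀ : Measure ℝ) [IsProbabilityMeasure ρ₀]
    (M : ℝ) (hsupp : ρ₀ (Set.Icc (-M) M)ᶜ = 0)
    (heven : ρ₀.map (fun x => -x) = ρ₀)
    (k : ℕ) (t : ℝ) (ht : 0 ≤ t) :
    Summable (fun m : ℕ => |moment ρ₀ (2 * (k + m)) 0| * t ^ m / m.factorial) ∧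
    Summable (fun m : ℕ => |moment ρ₀ (2 * m) 0| * t ^ m / m.factorial) ∧
    moment ρ₀ (2 * k) t =
      (∑' m : ℕ, moment ρ₀ (2 * (k + m)) 0 * t ^ m / m.factorial) /
        (∑' m : ℕ, moment ρ₀ (2 * m) 0 * t ^ m / m.factorial) :=
  stmt4_general ρ₀ M hsupp k t
end

section
/- Let (b_n) be positive reals, a_n = b_n b_{n+1}, and suppose Σ_{n=0}^∞ ln a_n converges. Then Σ_{n=0}^∞ ln b_n converges if and only if b_n → 1 as n → ∞, which is equivalent to lim_{n→∞} (a_0 a_2 ⋯ a_{2n}) / (b_0 a_1 a_3 ⋯ a_{2n+1}) = 1. -/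
open Filter

theorem stmt13 (b : ℕ → ℝ) (hb : ∀ n, 0 < b n) (a : ℕ → ℝ)
    (ha : ∀ n, a n = b n * b (n + 1))
    (haconv : ∃ S : ℝ,
      Tendsto (fun N => ∑ n ∈ Finset.range N, Real.log (a n)) atTop (nhds S)) :
    ((∃ S' : ℝ,
        Tendsto (fun N => ∑ n ∈ Finset.range N, Real.log (b n)) atTop (nhds S')) ↔
      Tendsto b atTop (nhds 1)) ∧
    (Tendsto b atTop (nhds 1) ↔
      Tendsto (fun n =>
          (∏ k ∈ Finset.range (n + 1), a (2 * k)) /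
            (b 0 * ∏ k ∈ Finset.range (n + 1), a (2 * k + 1)))
        atTop (nhds 1)) := by
  obtain ⟨S, hS⟩ := haconv
  have hbne : ∀ n, b n ≠ 0 := fun n => (hb n).ne'
  have hapos : ∀ n, 0 < a n := fun n => (ha n) ▸ mul_pos (hb n) (hb (n + 1))
  set L : ℕ → ℝ := fun N => ∑ n ∈ Finset.range N, Real.log (b n) with hL
  -- partial sums identity
  have hsum : ∀ N, ∑ n ∈ Finset.range N, Real.log (a n)
      = L N + (L (N + 1) - Real.log (b 0)) := by
    intro N
    have h1 : ∑ n ∈ Finset.range N, Real.log (a n)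
        = ∑ n ∈ Finset.range N, (Real.log (b n) + Real.log (b (n + 1))) := by
      refine Finset.sum_congr rfl fun n _ => ?_
      rw [ha n, Real.log_mul (hbne n) (hbne (n + 1))]
    have h2 : L (N + 1) = (∑ n ∈ Finset.range N, Real.log (b (n + 1))) + Real.log (b 0) :=
      Finset.sum_range_succ' _ N
    rw [h1, Finset.sum_add_distrib]
    rw [h2]; ring
  -- a n → 1
  have hloga : Tendsto (fun n => Real.log (a n)) atTop (nhds 0) := by
    have h := ((hS.comp (tendsto_add_atTop_nat 1)).sub hS)
    simp only [Function.comp] at h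
    have : (fun N => (∑ n ∈ Finset.range (N + 1), Real.log (a n))
        - ∑ n ∈ Finset.range N, Real.log (a n)) = fun n => Real.log (a n) := by
      funext N; rw [Finset.sum_range_succ]; ring
    rw [this] at h; simpa using h
  have hA : Tendsto a atTop (nhds 1) := by
    have h := (Real.continuous_exp.tendsto 0).comp hloga
    rw [Real.exp_zero] at h
    exact h.congr fun n => Real.exp_log (hapos n)
  -- product telescoping
  have hprod : ∀ m, (∏ k ∈ Finset.range m, a (2 * k)) * b (2 * m)
      = b 0 * ∏ k ∈ Finset.range m, a (2 * k + 1) := by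
    intro m
    induction m with
    | zero => simp
    | succ m ih =>
      rw [Finset.prod_range_succ, Finset.prod_range_succ]
      have e1 : a (2 * m) = b (2 * m) * b (2 * m + 1) := ha _
      have e2 : a (2 * m + 1) = b (2 * m + 1) * b (2 * m + 2) := by
        have := ha (2 * m + 1); convert this using 3 <;> omega
      have e3 : (2 : ℕ) * (m + 1) = 2 * m + 2 := by omega
      rw [e3, e1, e2]
      linear_combination (b (2 * m + 1) * b (2 * m + 2)) * ih
  have hPpos : ∀ n, (0:ℝ) < b 0 * ∏ k ∈ Finset.range (n + 1), a (2 * k + 1) :=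
    fun n => mul_pos (hb 0) (Finset.prod_pos fun k _ => hapos _)
  have hPeq : ∀ n, (∏ k ∈ Finset.range (n + 1), a (2 * k)) /
      (b 0 * ∏ k ∈ Finset.range (n + 1), a (2 * k + 1)) = (b (2 * n + 2))⁻¹ := by
    intro n
    have h := hprod (n + 1)
    have e3 : (2 : ℕ) * (n + 1) = 2 * n + 2 := by omega
    rw [e3] at h
    rw [div_eq_iff (hPpos n).ne', inv_mul_eq_div, eq_div_iff (hbne _)]
    linarith [h]
  constructor
  · constructor
    · rintro ⟨S', hS'⟩
      have hlogb : Tendsto (fun N => Real.log (b N)) atTop (nhds 0) := by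
        have h := (hS'.comp (tendsto_add_atTop_nat 1)).sub hS'
        simp only [Function.comp] at h
        have heq : (fun N => L (N + 1) - L N) = fun N => Real.log (b N) := by
          funext N; simp [hL, Finset.sum_range_succ]
        rw [heq] at h; simpa using h
      have h := (Real.continuous_exp.tendsto 0).comp hlogb
      rw [Real.exp_zero] at h
      exact h.congr fun n => Real.exp_log (hb n)
    · intro hb1
      have hlogb : Tendsto (fun N => Real.log (b N)) atTop (nhds 0) := by
        have h := ((Real.continuousAt_log one_ne_zero).tendsto).comp hb1
        simp only [Function.comp, Real.log_one] at h
        exact h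
      refine ⟨(S + Real.log (b 0)) / 2, ?_⟩
      have heq : L = fun N => ((∑ n ∈ Finset.range N, Real.log (a n))
          - Real.log (b N) + Real.log (b 0)) / 2 := by
        funext N
        have h1 := hsum N
        have h2 : L (N + 1) = L N + Real.log (b N) := by
          simp [hL, Finset.sum_range_succ]
        rw [h2] at h1; linarith
      rw [heq]
      have h := ((hS.sub hlogb).add (tendsto_const_nhds (x := Real.log (b 0)))).div_const 2
      simpa using h
  · constructor
    · intro hb1
      have h2n : Tendsto (fun n => 2 * n + 2) atTop atTop :=
        tendsto_atTop_mono (f := id) (fun n => by simp only [id]; omega) tendsto_id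
      have heven := hb1.comp h2n
      have h := heven.inv₀ one_ne_zero
      simp only [Function.comp, inv_one] at h
      have : (fun n => (b (2 * n + 2))⁻¹) = fun n =>
          (∏ k ∈ Finset.range (n + 1), a (2 * k)) /
            (b 0 * ∏ k ∈ Finset.range (n + 1), a (2 * k + 1)) := by
        funext n; rw [hPeq n]
      rwa [this] at h
    · intro hP
      have heven : Tendsto (fun n => b (2 * n + 2)) atTop (nhds 1) := by
        have h := hP.inv₀ one_ne_zero
        simp only [inv_one] at h
        have : (fun n => ((∏ k ∈ Finset.range (n + 1), a (2 * k)) /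
            (b 0 * ∏ k ∈ Finset.range (n + 1), a (2 * k + 1)))⁻¹)
            = fun n => b (2 * n + 2) := by
          funext n; rw [hPeq n, inv_inv]
        rwa [this] at h
      have hodd : Tendsto (fun n => b (2 * n + 3)) atTop (nhds 1) := by
        have h2n : Tendsto (fun n => 2 * n + 2) atTop atTop :=
          tendsto_atTop_mono (f := id) (fun n => by simp only [id]; omega) tendsto_id
        have hA2 := hA.comp h2n
        have h := hA2.div heven one_ne_zero
        rw [div_one] at h
        refine h.congr fun n => ?_
        show a (2 * n + 2) / b (2 * n + 2) = b (2 * n + 3)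
        have e : a (2 * n + 2) = b (2 * n + 2) * b (2 * n + 3) := by
          have := ha (2 * n + 2); convert this using 3 <;> omega
        rw [e, mul_div_cancel_left₀ _ (hbne _)]
      rw [Metric.tendsto_atTop] at heven hodd ⊢
      intro ε hε
      obtain ⟨N1, h1⟩ := heven ε hε
      obtain ⟨N2, h2⟩ := hodd ε hε
      refine ⟨2 * N1 + 2 * N2 + 4, fun n hn => ?_⟩
      rcases Nat.even_or_odd n with ⟨k, hk⟩ | ⟨k, hk⟩
      · have hk1 : n = 2 * (k - 1) + 2 := by omega
        rw [hk1]
        exact h1 _ (by omega)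
      · have hk1 : n = 2 * (k - 1) + 3 := by omega
        rw [hk1]
        exact h2 _ (by omega)
end
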